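/- (Slab preservation for entire graphical mean curvature flows, used in Corollary "globalbecominggraphcor".) Let n ≥ 1, T ∈ (0,∞], ϱ > 0, and let f : [0,T) × ℝⁿ → ℝ be a graphical mean curvature flow with sup_{(t,x)} |f(t,x)| < ∞ and sup_{(t,x)} |Df(t,x)| < ∞. If |f(0,x)| ≤ ϱ for all x ∈ ℝⁿ, then |f(t,x)| ≤ ϱ for all t ∈ [0,T) and all x ∈ ℝⁿ. -/

import Mathlib

open Metric Set MeasureTheory

/-- Partial derivative `∂ᵢ g (x)`. -/
noncomputable def pd {n : ℕ} (g : EuclideanSpace ℝ (Fin n) → ℝ) (x : EuclideanSpace ℝ (Fin n))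
    (i : Fin n) : ℝ :=
  fderiv ℝ g x (EuclideanSpace.single i 1)

/-- Second partial derivative `∂ᵢ∂ⱼ g (x)`. -/
noncomputable def pd2 {n : ℕ} (g : EuclideanSpace ℝ (Fin n) → ℝ) (x : EuclideanSpace ℝ (Fin n))
    (i j : Fin n) : ℝ :=
  fderiv ℝ (fun y => pd g y j) x (EuclideanSpace.single i 1)

/-- Squared Euclidean norm `|Dg(x)|²` of the spatial gradient. -/
noncomputable def gradNormSq {n : ℕ} (g : EuclideanSpace ℝ (Fin n) → ℝ)
    (x : EuclideanSpace ℝ (Fin n)) : ℝ :=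
  ∑ i, (pd g x i) ^ 2

/-- Euclidean norm `|Dg(x)|` of the spatial gradient. -/
noncomputable def gradNorm {n : ℕ} (g : EuclideanSpace ℝ (Fin n) → ℝ)
    (x : EuclideanSpace ℝ (Fin n)) : ℝ :=
  Real.sqrt (gradNormSq g x)

/-- Frobenius norm `|D²g(x)|` of the spatial Hessian. -/
noncomputable def hessNorm {n : ℕ} (g : EuclideanSpace ℝ (Fin n) → ℝ)
    (x : EuclideanSpace ℝ (Fin n)) : ℝ :=
  Real.sqrt (∑ i, ∑ j, (pd2 g x i j) ^ 2)

/-- Right-hand side of the graphical mean curvature flow equation: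
`∑ᵢⱼ (δᵢⱼ − ∂ᵢg ∂ⱼg / (1+|Dg|²)) ∂ᵢ∂ⱼ g`. -/
noncomputable def mcfRHS {n : ℕ} (g : EuclideanSpace ℝ (Fin n) → ℝ)
    (x : EuclideanSpace ℝ (Fin n)) : ℝ :=
  ∑ i, ∑ j,
    ((if i = j then (1 : ℝ) else 0) - pd g x i * pd g x j / (1 + gradNormSq g x)) * pd2 g x i j

/-- `f` is a (smooth) graphical mean curvature flow on `I × U`. -/
def IsGMCF {n : ℕ} (I : Set ℝ) (U : Set (EuclideanSpace ℝ (Fin n)))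
    (f : ℝ → EuclideanSpace ℝ (Fin n) → ℝ) : Prop :=
  ContDiffOn ℝ (⊤ : ℕ∞) (fun p : ℝ × EuclideanSpace ℝ (Fin n) => f p.1 p.2) (I ×ˢ U) ∧
  ∀ t ∈ I, ∀ x ∈ U, deriv (fun s => f s x) t = mcfRHS (f t) x

/-- Squared norm `|A|²(g,x)` of the second fundamental form of the graph of `g`
at `(x, g(x))`. -/
noncomputable def secondFF2 {n : ℕ} (g : EuclideanSpace ℝ (Fin n) → ℝ)
    (x : EuclideanSpace ℝ (Fin n)) : ℝ :=
  ∑ i, ∑ j, ∑ k, ∑ l,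
    ((if i = k then (1 : ℝ) else 0) - pd g x i * pd g x k / (1 + gradNormSq g x)) *
      ((if j = l then (1 : ℝ) else 0) - pd g x j * pd g x l / (1 + gradNormSq g x)) *
      (pd2 g x i j / Real.sqrt (1 + gradNormSq g x)) *
      (pd2 g x k l / Real.sqrt (1 + gradNormSq g x))

/-! The barrier `δ (|x|² + (2n+1) t)` makes this a maximum principle. If
`f - δ (|x|² + (2n+1) t)` exceeded `ϱ` on `[0,t] × ℝⁿ`, then, `f` being bounded, it would attain
its maximum there at some positive time `t'`. At that point `D²f ≤ 2δ`, and since the coefficient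
matrix `δᵢⱼ - ∂ᵢf ∂ⱼf / (1 + |Df|²)` is positive semidefinite with trace at most `n`, the flow
equation gives `∂ₜf ≤ 2δn`; maximality in time gives `∂ₜf ≥ (2n+1)δ`. Letting `δ → 0` bounds `f`
above by `ϱ`, and the same argument for the flow `-f` bounds it below. -/

open Filter Topology Matrix
open scoped MatrixOrder

theorem Matrix.PosSemidef.sum_mul_le {ι : Type*} [Fintype ι] {A H : Matrix ι ι ℝ}
    (hA : A.PosSemidef) {c : ℝ} (hH : ∀ v, v ⬝ᵥ H *ᵥ v ≤ c * (v ⬝ᵥ v)) :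
    ∑ i, ∑ j, A i j * H i j ≤ c * A.trace := by
  classical
  obtain ⟨B, rfl⟩ := CStarAlgebra.nonneg_iff_eq_star_mul_self.mp hA.nonneg
  calc ∑ i, ∑ j, (star B * B) i j * H i j = ∑ k, B k ⬝ᵥ H *ᵥ B k := by
        simp only [star_eq_conjTranspose, conjTranspose_eq_transpose_of_trivial, mul_apply,
          transpose_apply, dotProduct, mulVec, Finset.mul_sum, Finset.sum_mul]
        refine (Finset.sum_congr rfl fun i _ => Finset.sum_comm).trans ?_
        rw [Finset.sum_comm]
        exact Finset.sum_congr rfl fun k _ => Finset.sum_congr rfl fun i _ =>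
          Finset.sum_congr rfl fun j _ => by ring
    _ ≤ ∑ k, c * (B k ⬝ᵥ B k) := Finset.sum_le_sum fun k _ => hH (B k)
    _ = c * (star B * B).trace := by
        simp only [star_eq_conjTranspose, conjTranspose_eq_transpose_of_trivial, trace, diag,
          mul_apply, transpose_apply, dotProduct, ← Finset.mul_sum]
        rw [Finset.sum_comm]

theorem IsLocalMax.deriv_deriv_nonpos {h : ℝ → ℝ} {a : ℝ} (hmax : IsLocalMax h a)
    (hc : ContinuousAt h a) : deriv (deriv h) a ≤ 0 := by
  by_contra! hpos
  -- The second derivative test would make `a` also a local minimum, so `h` is locally constant.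
  have hmin := isLocalMin_of_deriv_deriv_pos hpos hmax.deriv_eq_zero hc
  have hconst : h =ᶠ[𝓝 a] fun _ => h a :=
    (hmax.and hmin).mono fun s hs => le_antisymm hs.1 hs.2
  have hderiv : deriv h =ᶠ[𝓝 a] fun _ => 0 :=
    hconst.eventually_nhds.mono fun s hs => by rw [Filter.EventuallyEq.deriv_eq hs, deriv_const]
  rw [hderiv.deriv_eq, deriv_const] at hpos
  exact lt_irrefl _ hpos

theorem IsLocalMax.fderiv_fderiv_apply_self_nonpos {E : Type*} [NormedAddCommGroup E]
    [NormedSpace ℝ E] {G : E → ℝ} {x : E} (hmax : IsLocalMax G x) (hG : ContDiffAt ℝ 2 G x)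
    (v : E) : fderiv ℝ (fderiv ℝ G) x v v ≤ 0 := by
  set ℓ : ℝ → E := fun s => x + s • v
  have hℓ : ∀ s, HasDerivAt ℓ v s := fun s => by
    simpa only [one_smul] using ((hasDerivAt_id' s).smul_const v).const_add x
  have hℓ0 : ℓ 0 = x := by simp [ℓ]
  have hℓx : Tendsto ℓ (𝓝 0) (𝓝 x) := hℓ0 ▸ (hℓ 0).continuousAt.tendsto
  have hdiff : ∀ᶠ y in 𝓝 x, DifferentiableAt ℝ G y :=
    (hG.eventually (by simp)).mono fun y hy => hy.differentiableAt (by simp)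
  have hderiv : deriv (G ∘ ℓ) =ᶠ[𝓝 0] fun s => fderiv ℝ G (ℓ s) v :=
    (hℓx.eventually hdiff).mono fun s hs => (hs.hasFDerivAt.comp_hasDerivAt s (hℓ s)).deriv
  have hD2 : DifferentiableAt ℝ (fderiv ℝ G) x :=
    (hG.fderiv_right (m := 1) (by norm_num)).differentiableAt (by simp)
  have hderiv2 : HasDerivAt (fun s => fderiv ℝ G (ℓ s) v) (fderiv ℝ (fderiv ℝ G) x v v) 0 := by
    rw [← hℓ0] at hD2 ⊢
    exact (ContinuousLinearMap.apply ℝ ℝ v).hasFDerivAt.comp_hasDerivAt 0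
      (hD2.hasFDerivAt.comp_hasDerivAt 0 (hℓ 0))
  rw [← hderiv2.deriv, ← hderiv.deriv_eq]
  rw [← hℓ0] at hmax hG
  exact (hmax.comp_continuous (hℓ 0).continuousAt).deriv_deriv_nonpos
    (ContinuousAt.comp (g := G) hG.continuousAt (hℓ 0).continuousAt)

theorem IsLocalMax.fderiv_fderiv_apply_self_le_of_sub_norm_sq {E : Type*}
    [NormedAddCommGroup E] [InnerProductSpace ℝ E] {g : E → ℝ} {x : E} {δ : ℝ}
    (hmax : IsLocalMax (fun y => g y - δ * ‖y‖ ^ 2) x) (hg : ContDiffAt ℝ 2 g x) (v : E) :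
    fderiv ℝ (fderiv ℝ g) x v v ≤ 2 * δ * ‖v‖ ^ 2 := by
  set L : E →L[ℝ] E →L[ℝ] ℝ := (2 * δ) • innerSL ℝ
  have hL : L v v = 2 * δ * ‖v‖ ^ 2 := by
    change (2 * δ) * inner ℝ v v = _
    rw [real_inner_self_eq_norm_sq]
  have hfd : fderiv ℝ (fun y => g y - δ * ‖y‖ ^ 2) =ᶠ[𝓝 x] fun y => fderiv ℝ g y - L y :=
    (hg.eventually (by simp)).mono fun y hy => by
      rw [fderiv_fun_sub (hy.differentiableAt (by simp))
        ((hasStrictFDerivAt_norm_sq y).differentiableAt.const_mul δ),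
        fderiv_const_mul (hasStrictFDerivAt_norm_sq y).differentiableAt, fderiv_norm_sq]
      congr 1
      ext w
      simp only [Pi.smul_apply, L, _root_.smul_apply, smul_eq_mul, nsmul_eq_mul]
      ring
  have hD2 : DifferentiableAt ℝ (fderiv ℝ g) x :=
    (hg.fderiv_right (m := 1) (by norm_num)).differentiableAt (by simp)
  have hnonpos := hmax.fderiv_fderiv_apply_self_nonpos
    (hg.sub (contDiffAt_const.mul (contDiffAt_id.norm_sq ℝ))) v
  rw [hfd.fderiv_eq, fderiv_fun_sub hD2 L.differentiableAt, L.fderiv,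
    _root_.sub_apply, _root_.sub_apply, hL] at hnonpos
  linarith

theorem HasDerivAt.nonneg_of_isMaxOn_Icc {φ : ℝ → ℝ} {φ' a b : ℝ} (hab : a < b)
    (hφ : HasDerivAt φ φ' b) (hmax : IsMaxOn φ (Icc a b) b) : 0 ≤ φ' := by
  have hseg : segment ℝ b (b + (a - b)) ⊆ Icc a b := by
    rw [add_sub_cancel, segment_symm, segment_eq_Icc hab.le]
  have := hmax.localize.hasFDerivWithinAt_nonpos hφ.hasFDerivAt.hasFDerivWithinAt
    (mem_posTangentConeAt_of_segment_subset hseg)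
  rw [ContinuousLinearMap.toSpanSingleton_apply, smul_eq_mul] at this
  nlinarith

theorem ContinuousOn.exists_isMaxOn_Icc_prod_univ {E : Type*} [NormedAddCommGroup E]
    [ProperSpace E] {W : ℝ × E → ℝ} {a b : ℝ} (hab : a ≤ b)
    (hW : ContinuousOn W (Icc a b ×ˢ univ))
    (hcoer : ∀ C, ∃ R, ∀ s ∈ Icc a b, ∀ y, R < ‖y‖ → W (s, y) ≤ C) :
    ∃ p ∈ Icc a b ×ˢ univ, IsMaxOn W (Icc a b ×ˢ univ) p := by
  obtain ⟨R, hR⟩ := hcoer (W (a, 0))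
  have hK : IsCompact (Icc a b ×ˢ closedBall (0 : E) R) :=
    isCompact_Icc.prod (isCompact_closedBall 0 R)
  refine hW.exists_isMaxOn' (x₀ := (a, 0)) (isClosed_Icc.prod isClosed_univ)
    ⟨⟨le_rfl, hab⟩, trivial⟩ ?_
  filter_upwards [mem_inf_of_left hK.compl_mem_cocompact,
    mem_inf_of_right (mem_principal_self _)] with p hpK hpS
  refine hR p.1 hpS.1 p.2 (not_le.mp fun hp => hpK ⟨hpS.1, ?_⟩)
  rwa [mem_closedBall_zero_iff]

section Euclidean

variable {n : ℕ}

theorem ContinuousLinearMap.apply_toLp_toLp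
    (B : EuclideanSpace ℝ (Fin n) →L[ℝ] EuclideanSpace ℝ (Fin n) →L[ℝ] ℝ) (v : Fin n → ℝ) :
    B (WithLp.toLp 2 v) (WithLp.toLp 2 v) =
      v ⬝ᵥ (Matrix.of fun i j => B (EuclideanSpace.single i 1) (EuclideanSpace.single j 1)) *ᵥ
        v := by
  have hv : WithLp.toLp 2 v = ∑ i, v i • EuclideanSpace.single i (1 : ℝ) := by
    simpa using ((EuclideanSpace.basisFun (Fin n) ℝ).sum_repr (WithLp.toLp 2 v)).symm
  rw [hv]
  simp only [map_sum, _root_.map_smul, _root_.sum_apply, _root_.smul_apply, smul_eq_mul,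
    dotProduct, mulVec, of_apply, Finset.mul_sum]
  rw [Finset.sum_comm]
  exact Finset.sum_congr rfl fun i _ => Finset.sum_congr rfl fun j _ => by ring

theorem pd2_eq_fderiv_fderiv {g : EuclideanSpace ℝ (Fin n) → ℝ}
    {x : EuclideanSpace ℝ (Fin n)} (hg : DifferentiableAt ℝ (fderiv ℝ g) x) (i j : Fin n) :
    pd2 g x i j =
      fderiv ℝ (fderiv ℝ g) x (EuclideanSpace.single i 1) (EuclideanSpace.single j 1) := by
  rw [pd2, show (fun y => pd g y j) = fun y => fderiv ℝ g y (EuclideanSpace.single j 1) from rfl,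
    fderiv_clm_apply hg (differentiableAt_const _)]
  simp

noncomputable def mcfCoeff (p : Fin n → ℝ) : Matrix (Fin n) (Fin n) ℝ :=
  Matrix.of fun i j => (if i = j then (1 : ℝ) else 0) - p i * p j / (1 + ∑ k, p k ^ 2)

theorem posSemidef_mcfCoeff (p : Fin n → ℝ) : (mcfCoeff p).PosSemidef := by
  refine .of_dotProduct_mulVec_nonneg ?_ fun v => ?_
  · ext i j
    simp [mcfCoeff, eq_comm, mul_comm]
  · have hq : 0 < 1 + ∑ k, p k ^ 2 := by positivity
    have hquad : star v ⬝ᵥ mcfCoeff p *ᵥ v =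
        ∑ i, v i ^ 2 - (∑ i, p i * v i) ^ 2 / (1 + ∑ k, p k ^ 2) := by
      simp only [mcfCoeff, star_trivial, dotProduct, mulVec, of_apply, sub_mul, ite_mul, one_mul,
        zero_mul, Finset.sum_sub_distrib, Finset.sum_ite_eq, Finset.mem_univ, if_true, mul_sub,
        Finset.mul_sum]
      rw [sq, Finset.sum_mul_sum, Finset.sum_div]
      simp only [Finset.sum_div, sq]
      congr 1
      exact Finset.sum_congr rfl fun i _ => Finset.sum_congr rfl fun j _ => by ring
    have hcauchySchwarz := Finset.sum_mul_sq_le_sq_mul_sq Finset.univ p v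
    have hv : 0 ≤ ∑ i, v i ^ 2 := by positivity
    rw [hquad, sub_nonneg, div_le_iff₀ hq]
    nlinarith

theorem trace_mcfCoeff_le (p : Fin n → ℝ) : (mcfCoeff p).trace ≤ n := by
  have : 0 ≤ ∑ i, p i * p i / (1 + ∑ k, p k ^ 2) :=
    Finset.sum_nonneg fun i _ => div_nonneg (mul_self_nonneg _) (by positivity)
  simp only [trace, diag, mcfCoeff, of_apply, if_true, Finset.sum_sub_distrib, Finset.sum_const,
    Finset.card_univ, Fintype.card_fin, nsmul_eq_mul, mul_one]
  linarith

theorem mcfRHS_eq_sum_mcfCoeff_mul (g : EuclideanSpace ℝ (Fin n) → ℝ)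
    (x : EuclideanSpace ℝ (Fin n)) :
    mcfRHS g x = ∑ i, ∑ j, mcfCoeff (pd g x) i j * pd2 g x i j := rfl

theorem mcfRHS_le_of_isLocalMax {g : EuclideanSpace ℝ (Fin n) → ℝ}
    {x : EuclideanSpace ℝ (Fin n)} {δ : ℝ} (hδ : 0 ≤ δ)
    (hmax : IsLocalMax (fun y => g y - δ * ‖y‖ ^ 2) x) (hg : ContDiffAt ℝ 2 g x) :
    mcfRHS g x ≤ 2 * δ * n := by
  have hD2 : DifferentiableAt ℝ (fderiv ℝ g) x :=
    (hg.fderiv_right (m := 1) (by norm_num)).differentiableAt (by simp)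
  have hHess : ∀ v, v ⬝ᵥ (Matrix.of fun i j => pd2 g x i j) *ᵥ v ≤ 2 * δ * (v ⬝ᵥ v) := by
    intro v
    have := hmax.fderiv_fderiv_apply_self_le_of_sub_norm_sq hg (WithLp.toLp 2 v)
    rw [ContinuousLinearMap.apply_toLp_toLp, EuclideanSpace.real_norm_sq_eq] at this
    simpa only [pd2_eq_fderiv_fderiv hD2, PiLp.toLp_apply, dotProduct, sq] using this
  calc mcfRHS g x = ∑ i, ∑ j, mcfCoeff (pd g x) i j * pd2 g x i j :=
        mcfRHS_eq_sum_mcfCoeff_mul g x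
    _ ≤ 2 * δ * (mcfCoeff (pd g x)).trace := (posSemidef_mcfCoeff _).sum_mul_le hHess
    _ ≤ 2 * δ * n := mul_le_mul_of_nonneg_left (trace_mcfCoeff_le _) (by positivity)

theorem pd_neg (g : EuclideanSpace ℝ (Fin n) → ℝ) (x : EuclideanSpace ℝ (Fin n))
    (i : Fin n) : pd (fun y => -g y) x i = -pd g x i := by
  simp [pd, fderiv_fun_neg]

theorem pd2_neg (g : EuclideanSpace ℝ (Fin n) → ℝ) (x : EuclideanSpace ℝ (Fin n))
    (i j : Fin n) : pd2 (fun y => -g y) x i j = -pd2 g x i j := by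
  simp [pd2, pd_neg, fderiv_fun_neg]

theorem mcfRHS_neg (g : EuclideanSpace ℝ (Fin n) → ℝ) (x : EuclideanSpace ℝ (Fin n)) :
    mcfRHS (fun y => -g y) x = -mcfRHS g x := by
  simp only [mcfRHS, gradNormSq, pd_neg, pd2_neg, neg_sq, ← Finset.sum_neg_distrib]
  exact Finset.sum_congr rfl fun i _ => Finset.sum_congr rfl fun j _ => by ring

end Euclidean

namespace IsGMCF

variable {n : ℕ} {I : Set ℝ} {U : Set (EuclideanSpace ℝ (Fin n))}
  {f : ℝ → EuclideanSpace ℝ (Fin n) → ℝ}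

theorem neg (hf : IsGMCF I U f) : IsGMCF I U fun t x => -f t x :=
  ⟨hf.1.neg, fun t ht x hx => by rw [deriv.fun_neg, hf.2 t ht x hx, mcfRHS_neg]⟩

theorem contDiffAt_space (hf : IsGMCF I U f) {t : ℝ} {x : EuclideanSpace ℝ (Fin n)}
    (h : I ×ˢ U ∈ 𝓝 (t, x)) : ContDiffAt ℝ 2 (f t) x :=
  ((hf.1.contDiffAt h).comp x (contDiffAt_const.prodMk contDiffAt_id)).of_le
    (WithTop.coe_le_coe.mpr le_top)

theorem hasDerivAt_time (hf : IsGMCF I U f) {t : ℝ} {x : EuclideanSpace ℝ (Fin n)}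
    (h : I ×ˢ U ∈ 𝓝 (t, x)) : HasDerivAt (fun s => f s x) (mcfRHS (f t) x) t := by
  have hdiff : DifferentiableAt ℝ
      ((fun p : ℝ × EuclideanSpace ℝ (Fin n) => f p.1 p.2) ∘ fun s => (s, x)) t :=
    ((hf.1.contDiffAt h).differentiableAt (by simp)).comp t
      (differentiableAt_id.prodMk (differentiableAt_const x))
  obtain ⟨ht, hx⟩ := mem_of_mem_nhds h
  exact hf.2 t ht x hx ▸ hdiff.hasDerivAt

theorem not_isMaxOn_sub_barrier (hf : IsGMCF I univ f) {t a δ : ℝ} (hI : I ∈ 𝓝 t) (hat : a < t)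
    (hδ : 0 < δ) (x : EuclideanSpace ℝ (Fin n))
    (hmax : IsMaxOn (fun p : ℝ × EuclideanSpace ℝ (Fin n) =>
      f p.1 p.2 - δ * (‖p.2‖ ^ 2 + (2 * n + 1) * p.1)) (Icc a t ×ˢ univ) (t, x)) : False := by
  have hnhds : I ×ˢ univ ∈ 𝓝 (t, x) := prod_mem_nhds hI univ_mem
  have hspace : IsLocalMax (fun y => f t y - δ * ‖y‖ ^ 2) x := by
    refine IsMaxOn.isLocalMax (s := univ) (fun y _ => ?_) univ_mem
    have := hmax (a := (t, y)) ⟨⟨hat.le, le_rfl⟩, trivial⟩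
    change f t y - δ * (‖y‖ ^ 2 + _) ≤ f t x - δ * (‖x‖ ^ 2 + _) at this
    show f t y - δ * ‖y‖ ^ 2 ≤ f t x - δ * ‖x‖ ^ 2
    linarith
  have htime : HasDerivAt (fun s => f s x - δ * (‖x‖ ^ 2 + (2 * n + 1) * s))
      (mcfRHS (f t) x - δ * (2 * n + 1)) t := by
    have := (hf.hasDerivAt_time hnhds).sub
      (((hasDerivAt_id' t).const_mul (2 * (n : ℝ) + 1)).const_add (‖x‖ ^ 2) |>.const_mul δ)
    rwa [mul_one] at this
  have hcurv := mcfRHS_le_of_isLocalMax hδ.le hspace (hf.contDiffAt_space hnhds)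
  have hslope := htime.nonneg_of_isMaxOn_Icc hat fun s hs => hmax (a := (s, x)) ⟨hs, trivial⟩
  nlinarith

variable {T : EReal} {ϱ M : ℝ}

theorem le_add_barrier (hf : IsGMCF {t : ℝ | 0 ≤ t ∧ (t : EReal) < T} univ f)
    (hM : ∀ t : ℝ, 0 ≤ t → (t : EReal) < T → ∀ x, f t x ≤ M) (h0 : ∀ x, f 0 x ≤ ϱ)
    {δ : ℝ} (hδ : 0 < δ) {t : ℝ} (ht : 0 ≤ t) (htT : (t : EReal) < T)
    (x : EuclideanSpace ℝ (Fin n)) : f t x ≤ ϱ + δ * (‖x‖ ^ 2 + (2 * n + 1) * t) := by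
  set W : ℝ × EuclideanSpace ℝ (Fin n) → ℝ :=
    fun p => f p.1 p.2 - δ * (‖p.2‖ ^ 2 + (2 * n + 1) * p.1)
  by_contra! hlt
  replace hlt : ϱ < W (t, x) := by simp only [W]; linarith
  have hsT : ∀ s ∈ Icc 0 t, (s : EReal) < T := fun s hs =>
    (EReal.coe_le_coe_iff.mpr hs.2).trans_lt htT
  have hWcont : ContinuousOn W (Icc 0 t ×ˢ univ) :=
    (hf.1.continuousOn.mono fun p hp => ⟨⟨hp.1.1, hsT _ hp.1⟩, trivial⟩).sub (by fun_prop)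
  have hcoer : ∀ C, ∃ R, ∀ s ∈ Icc 0 t, ∀ y, R < ‖y‖ → W (s, y) ≤ C := by
    refine fun C => ⟨√(|M - C| / δ), fun s hs y hy => ?_⟩
    rw [Real.sqrt_lt' ((Real.sqrt_nonneg _).trans_lt hy), div_lt_iff₀ hδ] at hy
    have hs0 : 0 ≤ δ * ((2 * n + 1) * s) := by have := hs.1; positivity
    simp only [W]
    linarith [le_abs_self (M - C), hM s hs.1 (hsT s hs) y]
  obtain ⟨⟨t', x'⟩, ⟨⟨ht'0, ht't⟩, -⟩, hmax⟩ := hWcont.exists_isMaxOn_Icc_prod_univ ht hcoer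
  have ht'pos : 0 < t' := by
    refine ht'0.lt_of_ne fun h => ?_
    subst h
    have hW' : ϱ < W (0, x') := hlt.trans_le (hmax ⟨⟨ht, le_rfl⟩, trivial⟩)
    have : 0 ≤ δ * ‖x'‖ ^ 2 := by positivity
    simp only [W] at hW'
    linarith [h0 x']
  have hI : {t : ℝ | 0 ≤ t ∧ (t : EReal) < T} ∈ 𝓝 t' := inter_mem (Ici_mem_nhds ht'pos)
    ((continuous_coe_real_ereal.isOpen_preimage _ isOpen_Iio).mem_nhds (hsT t' ⟨ht'0, ht't⟩))
  exact hf.not_isMaxOn_sub_barrier hI ht'pos hδ x'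
    (hmax.on_subset (prod_mono (Icc_subset_Icc_right ht't) subset_rfl))

theorem le_of_initial_le (hf : IsGMCF {t : ℝ | 0 ≤ t ∧ (t : EReal) < T} univ f)
    (hM : ∀ t : ℝ, 0 ≤ t → (t : EReal) < T → ∀ x, f t x ≤ M) (h0 : ∀ x, f 0 x ≤ ϱ)
    {t : ℝ} (ht : 0 ≤ t) (htT : (t : EReal) < T) (x : EuclideanSpace ℝ (Fin n)) :
    f t x ≤ ϱ := by
  have hlim : Tendsto (fun δ => ϱ + δ * (‖x‖ ^ 2 + (2 * n + 1) * t)) (𝓝[>] 0) (𝓝 ϱ) := by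
    refine (Continuous.tendsto' ?_ 0 ϱ (by simp)).mono_left nhdsWithin_le_nhds
    fun_prop
  exact ge_of_tendsto hlim (eventually_nhdsWithin_of_forall fun δ hδ =>
    hf.le_add_barrier hM h0 hδ ht htT x)

end IsGMCF

theorem slabPreservation_general (n : ℕ) (T : EReal) (ϱ : ℝ) (f : ℝ → EuclideanSpace ℝ (Fin n) → ℝ)
    (hf : IsGMCF {t : ℝ | 0 ≤ t ∧ (t : EReal) < T}
      (Set.univ : Set (EuclideanSpace ℝ (Fin n))) f)
    (hbd : ∃ M : ℝ, ∀ t : ℝ, 0 ≤ t → (t : EReal) < T →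
      ∀ x : EuclideanSpace ℝ (Fin n), |f t x| ≤ M)
    (h0 : ∀ x : EuclideanSpace ℝ (Fin n), |f 0 x| ≤ ϱ) :
    ∀ t : ℝ, 0 ≤ t → (t : EReal) < T →
      ∀ x : EuclideanSpace ℝ (Fin n), |f t x| ≤ ϱ := by
  obtain ⟨M, hM⟩ := hbd
  intro t ht htT x
  have hupper := hf.le_of_initial_le (fun s hs hsT y => (abs_le.mp (hM s hs hsT y)).2)
    (fun y => (abs_le.mp (h0 y)).2) ht htT x
  have hlower := hf.neg.le_of_initial_le (fun s hs hsT y => neg_le.mp (abs_le.mp (hM s hs hsT y)).1)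
    (fun y => neg_le.mp (abs_le.mp (h0 y)).1) ht htT x
  exact abs_le.mpr ⟨by linarith, hupper⟩

/-- **Slab preservation** for entire graphical mean curvature flows.
If `f` is a graphical mean curvature flow on `[0,T) × ℝⁿ` (with `T ∈ (0,∞]`), uniformly
bounded and with uniformly bounded gradient, and `|f(0,·)| ≤ ϱ`, then `|f(t,·)| ≤ ϱ`
for all `t ∈ [0,T)`. -/
theorem slabPreservation (n : ℕ) (hn : 1 ≤ n) (T : EReal) (hT : 0 < T) (ϱ : ℝ)
    (hϱ : 0 < ϱ) (f : ℝ → EuclideanSpace ℝ (Fin n) → ℝ)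
    (hf : IsGMCF {t : ℝ | 0 ≤ t ∧ (t : EReal) < T}
      (Set.univ : Set (EuclideanSpace ℝ (Fin n))) f)
    (hbd : ∃ M : ℝ, ∀ t : ℝ, 0 ≤ t → (t : EReal) < T →
      ∀ x : EuclideanSpace ℝ (Fin n), |f t x| ≤ M)
    (hgrad : ∃ M : ℝ, ∀ t : ℝ, 0 ≤ t → (t : EReal) < T →
      ∀ x : EuclideanSpace ℝ (Fin n), gradNorm (f t) x ≤ M)
    (h0 : ∀ x : EuclideanSpace ℝ (Fin n), |f 0 x| ≤ ϱ) :
    ∀ t : ℝ, 0 ≤ t → (t : EReal) < T →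
      ∀ x : EuclideanSpace ℝ (Fin n), |f t x| ≤ ϱ :=
  slabPreservation_general n T ϱ f hf hbd h0
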